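/- arXiv:1903.10567 — 2 statements merged into one kernel-verified Lean document; each statement's English description precedes it below -/
import Mathlib

section
/- Let K = (s_min, s_max) ⊆ ℝ, and let M_U, M_D : K → (0,∞) be continuous with continuous ratio R(s) = M_D(s)/M_U(s) strictly increasing and bijective onto (0,∞), with inverse T. Define the pointwise PSO divergence D(s*, s) = -p_U·(W_U(s) - W_U(s*)) + p_D·(W_D(s) - W_D(s*)), where p_U, p_D > 0, s* = T(p_U/p_D), and W_U, W_D are antiderivatives of M_U, M_D on K. Then D(s*, s) ≥ 0 for all s ∈ K, and D(s*, s) = 0 if and only if s = s*. -/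
open Set

/-!
Put `F = -p_U W_U + p_D W_D`, so that the divergence is `F s - F s*`. Since `M_D = R M_U`,
`F' = M_U (p_D R - p_U)`, and as `R` is strictly increasing with `R s* = p_U / p_D`, `F'` is
negative left of `s*` and positive right of it. So `F` strictly decreases up to `s*` and strictly
increases after it, making `s*` the strict minimum of `F` on `K`.
-/

theorem apply_lt_of_hasDerivAt_neg_left_pos_right {f f' : ℝ → ℝ} {a b c x : ℝ}
    (hf : ∀ y ∈ Ioo a b, HasDerivAt f (f' y) y)
    (hneg : ∀ y ∈ Ioo a c, f' y < 0) (hpos : ∀ y ∈ Ioo c b, 0 < f' y)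
    (hc : c ∈ Ioo a b) (hx : x ∈ Ioo a b) (hxc : x ≠ c) : f c < f x := by
  have hcont : ContinuousOn f (Ioo a b) := fun y hy => (hf y hy).continuousAt.continuousWithinAt
  rcases hxc.lt_or_gt with hlt | hgt
  · have hanti : StrictAntiOn f (Icc x c) := by
      refine strictAntiOn_of_hasDerivWithinAt_neg (f' := f') (convex_Icc x c)
        (hcont.mono (Icc_subset_Ioo hx.1 hc.2)) (fun y hy => ?_) (fun y hy => ?_)
      · rw [interior_Icc] at hy
        exact (hf y ⟨hx.1.trans hy.1, hy.2.trans hc.2⟩).hasDerivWithinAt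
      · rw [interior_Icc] at hy
        exact hneg y ⟨hx.1.trans hy.1, hy.2⟩
    exact hanti (left_mem_Icc.2 hlt.le) (right_mem_Icc.2 hlt.le) hlt
  · have hmono : StrictMonoOn f (Icc c x) := by
      refine strictMonoOn_of_hasDerivWithinAt_pos (f' := f') (convex_Icc c x)
        (hcont.mono (Icc_subset_Ioo hc.1 hx.2)) (fun y hy => ?_) (fun y hy => ?_)
      · rw [interior_Icc] at hy
        exact (hf y ⟨hc.1.trans hy.1, hy.2.trans hx.2⟩).hasDerivWithinAt
      · rw [interior_Icc] at hy
        exact hpos y ⟨hy.1, hy.2.trans hx.2⟩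
    exact hmono (left_mem_Icc.2 hgt.le) (right_mem_Icc.2 hgt.le) hgt

theorem neg_mul_add_mul_neg_of_div_lt_div {p q u d : ℝ} (hu : 0 < u) (hq : 0 < q)
    (h : d / u < p / q) : -p * u + q * d < 0 := by
  rw [div_lt_div_iff₀ hu hq] at h
  linarith

theorem neg_mul_add_mul_pos_of_div_lt_div {p q u d : ℝ} (hu : 0 < u) (hq : 0 < q)
    (h : p / q < d / u) : 0 < -p * u + q * d := by
  rw [div_lt_div_iff₀ hq hu] at h
  linarith

theorem pso_divergence_pointwise_general
    (smin smax : ℝ) (R T MU MD WU WD : ℝ → ℝ) (pU pD : ℝ)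
    (hpU : 0 < pU) (hpD : 0 < pD)
    -- the magnitude ratio R = M_D/M_U is continuous, strictly increasing and bijective onto (0,∞)
    (hRdef : ∀ s ∈ Ioo smin smax, MD s / MU s = R s)
    (hRmono : StrictMonoOn R (Ioo smin smax))
    -- T is the inverse of R between (0,∞) and K
    (hTmem : ∀ z : ℝ, 0 < z → T z ∈ Ioo smin smax)
    (hRT : ∀ z : ℝ, 0 < z → R (T z) = z)
    -- the magnitudes are continuous and positive on K
    (hMUpos : ∀ s ∈ Ioo smin smax, 0 < MU s)
    -- W_U and W_D are antiderivatives of M_U and M_D on K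
    (hWU : ∀ s ∈ Ioo smin smax, HasDerivAt WU (MU s) s)
    (hWD : ∀ s ∈ Ioo smin smax, HasDerivAt WD (MD s) s) :
    ∀ s ∈ Ioo smin smax,
      0 ≤ -pU * (WU s - WU (T (pU / pD))) + pD * (WD s - WD (T (pU / pD))) ∧
      (-pU * (WU s - WU (T (pU / pD))) + pD * (WD s - WD (T (pU / pD))) = 0 ↔
        s = T (pU / pD)) := by
  intro s hs
  set s₀ := T (pU / pD)
  have hs₀ : s₀ ∈ Ioo smin smax := hTmem _ (div_pos hpU hpD)
  have hRs₀ : R s₀ = pU / pD := hRT _ (div_pos hpU hpD)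
  have hmin : s ≠ s₀ → -pU * WU s₀ + pD * WD s₀ < -pU * WU s + pD * WD s := by
    refine apply_lt_of_hasDerivAt_neg_left_pos_right (f' := fun y => -pU * MU y + pD * MD y)
      (fun y hy => ((hWU y hy).const_mul (-pU)).add ((hWD y hy).const_mul pD))
      (fun y hy => ?_) (fun y hy => ?_) hs₀ hs
    · have hy' : y ∈ Ioo smin smax := ⟨hy.1, hy.2.trans hs₀.2⟩
      refine neg_mul_add_mul_neg_of_div_lt_div (hMUpos y hy') hpD ?_
      rw [hRdef y hy', ← hRs₀]
      exact hRmono hy' hs₀ hy.2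
    · have hy' : y ∈ Ioo smin smax := ⟨hs₀.1.trans hy.1, hy.2⟩
      refine neg_mul_add_mul_pos_of_div_lt_div (hMUpos y hy') hpD ?_
      rw [hRdef y hy', ← hRs₀]
      exact hRmono hs₀ hy' hy.1
  rcases eq_or_ne s s₀ with rfl | hne
  · simp
  · have hlt := hmin hne
    exact ⟨by linarith, ⟨fun h => by linarith, fun h => absurd h hne⟩⟩

/-- The pointwise PSO divergence `D(s*, s) = -p_U·(W_U(s) - W_U(s*)) + p_D·(W_D(s) - W_D(s*))`
with `s* = T(p_U/p_D)` is nonnegative on `K`, and vanishes iff `s = s*`. -/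
theorem pso_divergence_pointwise
    (smin smax : ℝ) (R T MU MD WU WD : ℝ → ℝ) (pU pD : ℝ)
    (hpU : 0 < pU) (hpD : 0 < pD)
    -- the magnitude ratio R = M_D/M_U is continuous, strictly increasing and bijective onto (0,∞)
    (hRdef : ∀ s ∈ Ioo smin smax, MD s / MU s = R s)
    (hRcont : ContinuousOn R (Ioo smin smax))
    (hRmono : StrictMonoOn R (Ioo smin smax))
    (hRpos : ∀ s ∈ Ioo smin smax, 0 < R s)
    (hRsurj : ∀ z : ℝ, 0 < z → ∃ s ∈ Ioo smin smax, R s = z)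
    -- T is the inverse of R between (0,∞) and K
    (hTmem : ∀ z : ℝ, 0 < z → T z ∈ Ioo smin smax)
    (hRT : ∀ z : ℝ, 0 < z → R (T z) = z)
    (hTR : ∀ s ∈ Ioo smin smax, T (R s) = s)
    -- the magnitudes are continuous and positive on K
    (hMUcont : ContinuousOn MU (Ioo smin smax))
    (hMDcont : ContinuousOn MD (Ioo smin smax))
    (hMUpos : ∀ s ∈ Ioo smin smax, 0 < MU s)
    (hMDpos : ∀ s ∈ Ioo smin smax, 0 < MD s)
    -- W_U and W_D are antiderivatives of M_U and M_D on K
    (hWU : ∀ s ∈ Ioo smin smax, HasDerivAt WU (MU s) s)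
    (hWD : ∀ s ∈ Ioo smin smax, HasDerivAt WD (MD s) s) :
    ∀ s ∈ Ioo smin smax,
      0 ≤ -pU * (WU s - WU (T (pU / pD))) + pD * (WD s - WD (T (pU / pD))) ∧
      (-pU * (WU s - WU (T (pU / pD))) + pD * (WD s - WD (T (pU / pD))) = 0 ↔
        s = T (pU / pD)) :=
  pso_divergence_pointwise_general smin smax R T MU MD WU WD pU pD hpU hpD hRdef hRmono hTmem hRT
    hMUpos hWU hWD
end

section
/- Suppose that at a stationary point of the empirical PSO loss we have, for a training point X with kernel values g(X, ·) ≥ 0 and g(X,X) > 0: M_U(X, f(X)) · g(X,X) + Σᵢ M_U(Xᵢᵁ, f(Xᵢᵁ)) · g(X, Xᵢᵁ) = (Nᵁ/Nᴰ) · Σⱼ M_D(Xⱼᴰ, f(Xⱼᴰ)) · g(X, Xⱼᴰ), where all M_U and M_D values are nonnegative. If moreover the relative kernel satisfies g(X, Xⱼᴰ)/g(X,X) ≤ exp(-d(X, Xⱼᴰ)/h_max) for each j, then M_U(X, f(X)) ≤ α where α = (Nᵁ/Nᴰ) · Σⱼ M_D(Xⱼᴰ, f(Xⱼᴰ)) ·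 exp(-d(X, Xⱼᴰ)/h_max). Consequently, if M_U(X, ·) is continuous and strictly decreasing in its second argument, then f(X) ≥ (M_U(X, ·))⁻¹(α). -/
/-!
Dropping the nonnegative contributions of the other up-points from the stationarity identity
leaves `M_U(X) g(X,X) ≤ (Nᵁ/Nᴰ) Σⱼ M_D(Xⱼᴰ) g(X,Xⱼᴰ)`; bounding each relative kernel value
`g(X,Xⱼᴰ)/g(X,X)` by its exponential envelope and cancelling `g(X,X) > 0` gives `M_U(X) ≤ α`.
Since `M_U(X,·)` is strictly decreasing, any `s` with `M_U(X,s) = α ≥ M_U(X,f(X))` lies below `f(X)`.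
-/

open Finset

theorem sum_mul_le_mul_sum_of_div_le {ι : Type*} (s : Finset ι) {m k e : ι → ℝ} {g : ℝ}
    (hg : 0 < g) (hm : ∀ j ∈ s, 0 ≤ m j) (hk : ∀ j ∈ s, k j / g ≤ e j) :
    ∑ j ∈ s, m j * k j ≤ g * ∑ j ∈ s, m j * e j := by
  rw [mul_sum]
  refine sum_le_sum fun j hj => ?_
  have hkj : k j ≤ g * e j := (div_le_iff₀' hg).mp (hk j hj)
  calc m j * k j ≤ m j * (g * e j) := mul_le_mul_of_nonneg_left hkj (hm j hj)
    _ = g * (m j * e j) := by ring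

theorem pso_spike_convergence_bound_general
    (NU ND : ℕ)
    (gXX : ℝ) (hgXX : 0 < gXX)
    (gU : Fin NU → ℝ) (gD : Fin ND → ℝ)
    (hgU : ∀ i, 0 ≤ gU i)
    (mU : ℝ) (mUi : Fin NU → ℝ) (mDj : Fin ND → ℝ)
    (hmUi : ∀ i, 0 ≤ mUi i) (hmDj : ∀ j, 0 ≤ mDj j)
    -- first-order stationarity projected on ∇f(X)
    (hstat : mU * gXX + ∑ i, mUi i * gU i = ((NU : ℝ) / ND) * ∑ j, mDj j * gD j)
    (dD : Fin ND → ℝ) (hmax : ℝ)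
    -- relative kernel bound
    (hrel : ∀ j, gD j / gXX ≤ Real.exp (-(dD j) / hmax))
    (fX : ℝ) (MUfun : ℝ → ℝ)
    (hval : MUfun fX = mU)
    (hanti : StrictAnti MUfun) :
    mU ≤ ((NU : ℝ) / ND) * ∑ j, mDj j * Real.exp (-(dD j) / hmax) ∧
    ∀ s : ℝ, MUfun s = ((NU : ℝ) / ND) * ∑ j, mDj j * Real.exp (-(dD j) / hmax) →
      s ≤ fX := by
  have hcross : 0 ≤ ∑ i, mUi i * gU i := sum_nonneg fun i _ => mul_nonneg (hmUi i) (hgU i)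
  have hkernel := sum_mul_le_mul_sum_of_div_le univ hgXX (fun j _ => hmDj j) (fun j _ => hrel j)
  have hα : mU ≤ ((NU : ℝ) / ND) * ∑ j, mDj j * Real.exp (-(dD j) / hmax) := by
    refine le_of_mul_le_mul_right ?_ hgXX
    calc mU * gXX ≤ ((NU : ℝ) / ND) * ∑ j, mDj j * gD j := by linarith
      _ ≤ ((NU : ℝ) / ND) * (gXX * ∑ j, mDj j * Real.exp (-(dD j) / hmax)) := by gcongr
      _ = _ := by ring
  exact ⟨hα, fun s hs => hanti.le_iff_ge.mp (by rw [hval, hs]; exact hα)⟩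

/-- Core inequality of the spike-convergence theorem: at a stationary point of the empirical
PSO loss, the up magnitude at a training point `X` is bounded by
`α = (Nᵁ/Nᴰ)·Σⱼ M_D(Xⱼᴰ, f(Xⱼᴰ))·exp(-d(X,Xⱼᴰ)/h_max)`; consequently, if `M_U(X,·)` is
continuous and strictly decreasing, then `f(X) ≥ M_U(X,·)⁻¹(α)`. -/
theorem pso_spike_convergence_bound
    (NU ND : ℕ) (hNU : 0 < NU) (hND : 0 < ND)
    (gXX : ℝ) (hgXX : 0 < gXX)
    (gU : Fin NU → ℝ) (gD : Fin ND → ℝ)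
    (hgU : ∀ i, 0 ≤ gU i) (hgD : ∀ j, 0 ≤ gD j)
    (mU : ℝ) (mUi : Fin NU → ℝ) (mDj : Fin ND → ℝ)
    (hmU : 0 ≤ mU) (hmUi : ∀ i, 0 ≤ mUi i) (hmDj : ∀ j, 0 ≤ mDj j)
    -- first-order stationarity projected on ∇f(X)
    (hstat : mU * gXX + ∑ i, mUi i * gU i = ((NU : ℝ) / ND) * ∑ j, mDj j * gD j)
    (dD : Fin ND → ℝ) (hmax : ℝ) (hhmax : 0 < hmax)
    -- relative kernel bound
    (hrel : ∀ j, gD j / gXX ≤ Real.exp (-(dD j) / hmax))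
    (fX : ℝ) (MUfun : ℝ → ℝ)
    (hval : MUfun fX = mU)
    (hcont : Continuous MUfun) (hanti : StrictAnti MUfun) :
    mU ≤ ((NU : ℝ) / ND) * ∑ j, mDj j * Real.exp (-(dD j) / hmax) ∧
    ∀ s : ℝ, MUfun s = ((NU : ℝ) / ND) * ∑ j, mDj j * Real.exp (-(dD j) / hmax) →
      s ≤ fX :=
  pso_spike_convergence_bound_general NU ND gXX hgXX gU gD hgU mU mUi mDj hmUi hmDj hstat dD hmax
    hrel fX MUfun hval hanti
end
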